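/- Let U ⊂ ℝ² be open, bounded, convex with x₀ ∈ U and δ = diam(U), and B ∈ H¹(ℝ²). Then ∫_U |A_new(x) − A_av(x)|² dx ≤ δ² ∫_U |B(y) − B_av|² dy, where A_new, A_av, B_av are as in the averaging theorem. -/

import Mathlib

/-!
Write `z = x - x₀` and `c = B_av`. Since `A₀` is linear, `A_new(x) - A_av(x) = m(x) A₀(z)` with
`m(x) = ∫₀¹ 2s (B(sz + x₀) - c) ds`, because `∫₀¹ 2s ds = 1`. Jensen on `[0,1]` and `|A₀ z| = |z|/2`
give `|A_new - A_av|² ≤ |z|² ∫₀¹ s² (B(sz + x₀) - c)² ds ≤ δ² ∫₀¹ s² (B(sz + x₀) - c)² ds`.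
Integrating over `U` and swapping the integrals, it remains to see that
`s² ∫_U (B(s(x - x₀) + x₀) - c)² dx ≤ ∫_U (B - c)²` for `0 < s ≤ 1`: the substitution
`y = s(x - x₀) + x₀` has Jacobian `s²` and, by convexity, maps `U` into `U`.
-/

open MeasureTheory

noncomputable section

/-- The canonical magnetic potential `A₀(x₁,x₂) = (−x₂/2, x₁/2)`. -/
def A0 (x : EuclideanSpace ℝ (Fin 2)) : EuclideanSpace ℝ (Fin 2) := WithLp.toLp 2 ![-(x 1)/2, x 0/2]

open Module Set

lemma sq_integral_le_integral_sq {Ω : Type*} [MeasurableSpace Ω] {μ : Measure Ω}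
    [IsProbabilityMeasure μ] {X : Ω → ℝ} (hX : MemLp X 2 μ) :
    (∫ ω, X ω ∂μ) ^ 2 ≤ ∫ ω, X ω ^ 2 ∂μ := by
  have := ProbabilityTheory.variance_nonneg X μ
  rw [ProbabilityTheory.variance_eq_sub hX] at this
  simpa using this

instance : IsProbabilityMeasure (volume.restrict (Ioc (0:ℝ) 1)) := ⟨by simp⟩

lemma sq_setIntegral_Ioc_zero_one_le {f : ℝ → ℝ} (hf : Continuous f) :
    (∫ s in Ioc (0:ℝ) 1, f s) ^ 2 ≤ ∫ s in Ioc (0:ℝ) 1, f s ^ 2 :=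
  sq_integral_le_integral_sq <|
    (memLp_two_iff_integrable_sq hf.aestronglyMeasurable).2 (hf.pow 2).integrableOn_Ioc

lemma Convex.smul_sub_add_mem {E : Type*} [AddCommGroup E] [Module ℝ E] {U : Set E}
    (hU : Convex ℝ U) {x₀ x : E} (hx₀ : x₀ ∈ U) (hx : x ∈ U) {s : ℝ} (hs : s ∈ Icc (0:ℝ) 1) :
    s • (x - x₀) + x₀ ∈ U := by
  rw [add_comm]
  exact hU.add_smul_sub_mem hx₀ hx hs

section Homothety

variable {E : Type*} [NormedAddCommGroup E] [NormedSpace ℝ E] [FiniteDimensional ℝ E]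
  [MeasurableSpace E] [BorelSpace E] (μ : Measure E) [μ.IsAddHaarMeasure]
  {U : Set E} {x₀ : E} {h : E → ℝ}

lemma setIntegral_comp_homothety_le (hU_meas : MeasurableSet U) (hU_conv : Convex ℝ U)
    (hx₀ : x₀ ∈ U) (hh_nonneg : 0 ≤ h) (hh_int : IntegrableOn h U μ) {s : ℝ}
    (hs : s ∈ Ioc (0:ℝ) 1) :
    ∫ x in U, s ^ finrank ℝ E * h (s • (x - x₀) + x₀) ∂μ ≤ ∫ y in U, h y ∂μ := by
  set φ : E → E := fun x => s • (x - x₀) + x₀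
  have hφ' : ∀ x ∈ U, HasFDerivWithinAt φ (s • ContinuousLinearMap.id ℝ E) U x := fun x _ =>
    (((hasFDerivAt_id x).sub_const x₀).const_smul s |>.add_const x₀).hasFDerivWithinAt
  have hφ_inj : InjOn φ U := fun a _ b _ hab =>
    sub_left_injective (smul_right_injective E hs.1.ne' (add_right_cancel hab))
  have hdet : |(s • ContinuousLinearMap.id ℝ E).det| = s ^ finrank ℝ E := by
    rw [ContinuousLinearMap.det, ContinuousLinearMap.toLinearMap_smul, ContinuousLinearMap.coe_id,
      LinearMap.det_smul, LinearMap.det_id, mul_one, abs_of_nonneg (pow_nonneg hs.1.le _)]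
  have hφU : φ '' U ⊆ U := image_subset_iff.2 fun x hx =>
    hU_conv.smul_sub_add_mem hx₀ hx (Ioc_subset_Icc_self hs)
  calc ∫ x in U, s ^ finrank ℝ E * h (φ x) ∂μ = ∫ y in φ '' U, h y ∂μ := by
        rw [integral_image_eq_integral_abs_det_fderiv_smul μ hU_meas hφ' hφ_inj, hdet]
        rfl
    _ ≤ ∫ y in U, h y ∂μ :=
        setIntegral_mono_set hh_int (ae_of_all _ hh_nonneg) hφU.eventuallyLE

lemma integrable_homothety_prod (hU_bdd : Bornology.IsBounded U) (hh : Continuous h) (d : ℕ) :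
    Integrable (fun p : E × ℝ => p.2 ^ d * h (p.2 • (p.1 - x₀) + x₀))
      ((μ.restrict U).prod (volume.restrict (Ioc 0 1))) := by
  rw [Measure.prod_restrict]
  refine IntegrableOn.mono_set ?_ (prod_mono subset_closure Ioc_subset_Icc_self)
  exact ContinuousOn.integrableOn_compact (hU_bdd.isCompact_closure.prod isCompact_Icc)
    (by fun_prop)

lemma setIntegral_setIntegral_homothety_le (hU_meas : MeasurableSet U)
    (hU_bdd : Bornology.IsBounded U) (hU_conv : Convex ℝ U) (hx₀ : x₀ ∈ U) (hh : Continuous h)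
    (hh_nonneg : 0 ≤ h) :
    ∫ x in U, (∫ s in Ioc (0:ℝ) 1, s ^ finrank ℝ E * h (s • (x - x₀) + x₀)) ∂μ
      ≤ ∫ y in U, h y ∂μ := by
  have hh_int : IntegrableOn h U μ :=
    hh.continuousOn.integrableOn_compact hU_bdd.isCompact_closure |>.mono_set subset_closure
  have hprod := integrable_homothety_prod μ hU_bdd hh (finrank ℝ E) (x₀ := x₀)
  rw [integral_integral_swap hprod]
  calc ∫ s in Ioc (0:ℝ) 1, ∫ x in U, s ^ finrank ℝ E * h (s • (x - x₀) + x₀) ∂μ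
      ≤ ∫ _ in Ioc (0:ℝ) 1, ∫ y in U, h y ∂μ :=
        setIntegral_mono_on hprod.integral_prod_right (integrable_const _) measurableSet_Ioc
          fun _ hs => setIntegral_comp_homothety_le μ hU_meas hU_conv hx₀ hh_nonneg hh_int hs
    _ = ∫ y in U, h y ∂μ := by simp

end Homothety

local notation "ℝ²" => EuclideanSpace ℝ (Fin 2)

lemma A0_smul (s : ℝ) (z : ℝ²) : A0 (s • z) = s • A0 z := by
  ext i
  fin_cases i <;>
    simp only [A0, PiLp.smul_apply, smul_eq_mul, Fin.zero_eta, Fin.mk_one, Matrix.cons_val_zero,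
      Matrix.cons_val_one, Matrix.cons_val_fin_one] <;> ring

lemma norm_A0_sq (z : ℝ²) : ‖A0 z‖ ^ 2 = ‖z‖ ^ 2 / 4 := by
  simp only [EuclideanSpace.real_norm_sq_eq, Fin.sum_univ_two, A0, Matrix.cons_val_zero,
    Matrix.cons_val_one, Matrix.cons_val_fin_one]
  ring

lemma intervalIntegral_smul_A0 (g : ℝ → ℝ) (z : ℝ²) :
    ∫ s in (0:ℝ)..1, g s • A0 (s • z) = (∫ s in (0:ℝ)..1, s * g s) • A0 z := by
  rw [← intervalIntegral.integral_smul_const]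
  simp_rw [A0_smul, smul_smul, mul_comm]

lemma norm_sq_potential_sub_le (B : ℝ² → ℝ) (hB : Continuous B) (c : ℝ) (x₀ z : ℝ²) :
    ‖(2:ℝ) • (∫ s in (0:ℝ)..1, B (s • z + x₀) • A0 (s • z)) - c • A0 z‖ ^ 2
      ≤ ‖z‖ ^ 2 * ∫ s in Ioc (0:ℝ) 1, s ^ 2 * (B (s • z + x₀) - c) ^ 2 := by
  set g : ℝ → ℝ := fun s => B (s • z + x₀)
  have hg : Continuous g := by fun_prop
  have hmean : 2 * (∫ s in (0:ℝ)..1, s * g s) - c = ∫ s in Ioc (0:ℝ) 1, 2 * s * (g s - c) := by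
    have hsplit : ∀ s, 2 * s * (g s - c) = 2 * (s * g s) - 2 * c * s := fun s => by ring
    rw [← intervalIntegral.integral_of_le zero_le_one]
    simp_rw [hsplit]
    rw [intervalIntegral.integral_sub ((by fun_prop : Continuous _).intervalIntegrable _ _)
        ((by fun_prop : Continuous _).intervalIntegrable _ _),
      intervalIntegral.integral_const_mul, intervalIntegral.integral_const_mul, integral_id]
    ring
  have hsq : ∀ s, (2 * s * (g s - c)) ^ 2 = 4 * (s ^ 2 * (g s - c) ^ 2) := fun s => by ring
  calc ‖(2:ℝ) • (∫ s in (0:ℝ)..1, g s • A0 (s • z)) - c • A0 z‖ ^ 2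
      = (∫ s in Ioc (0:ℝ) 1, 2 * s * (g s - c)) ^ 2 * (‖z‖ ^ 2 / 4) := by
        rw [intervalIntegral_smul_A0, smul_smul, ← sub_smul, norm_smul, mul_pow,
          Real.norm_eq_abs, sq_abs, norm_A0_sq, hmean]
    _ ≤ (∫ s in Ioc (0:ℝ) 1, (2 * s * (g s - c)) ^ 2) * (‖z‖ ^ 2 / 4) := by
        gcongr
        exact sq_setIntegral_Ioc_zero_one_le (by fun_prop)
    _ = ‖z‖ ^ 2 * ∫ s in Ioc (0:ℝ) 1, s ^ 2 * (g s - c) ^ 2 := by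
        simp_rw [hsq]
        rw [integral_const_mul]
        ring

theorem stmt_6_general (U : Set (EuclideanSpace ℝ (Fin 2)))
    (hU_open : IsOpen U) (hU_bdd : Bornology.IsBounded U) (hU_conv : Convex ℝ U)
    (x₀ : EuclideanSpace ℝ (Fin 2)) (hx₀ : x₀ ∈ U)
    (B : EuclideanSpace ℝ (Fin 2) → ℝ)
    (hB_diff : Differentiable ℝ B) :
    ∫ x in U,
        ‖((2:ℝ) • ∫ s in (0:ℝ)..1, B (s • (x - x₀) + x₀) • A0 (s • (x - x₀)))
          - ((volume U).toReal⁻¹ * ∫ y in U, B y) • A0 (x - x₀)‖ ^ 2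
      ≤ Metric.diam U ^ 2 *
          ∫ y in U, (B y - (volume U).toReal⁻¹ * ∫ z in U, B z) ^ 2 := by
  set c : ℝ := (volume U).toReal⁻¹ * ∫ y in U, B y
  set h : ℝ² → ℝ := fun y => (B y - c) ^ 2
  have hB : Continuous B := hB_diff.continuous
  have hh : Continuous h := by fun_prop
  have hrank : finrank ℝ ℝ² = 2 := finrank_euclideanSpace_fin
  have hpointwise : ∀ x ∈ U,
      ‖(2:ℝ) • (∫ s in (0:ℝ)..1, B (s • (x - x₀) + x₀) • A0 (s • (x - x₀))) - c • A0 (x - x₀)‖ ^ 2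
        ≤ Metric.diam U ^ 2 * ∫ s in Ioc (0:ℝ) 1, s ^ 2 * h (s • (x - x₀) + x₀) := by
    intro x hx
    refine (norm_sq_potential_sub_le B hB c x₀ (x - x₀)).trans ?_
    gcongr
    rw [← dist_eq_norm]
    exact Metric.dist_le_diam_of_mem hU_bdd hx hx₀
  calc _ ≤ ∫ x in U, Metric.diam U ^ 2 * ∫ s in Ioc (0:ℝ) 1, s ^ 2 * h (s • (x - x₀) + x₀) :=
        integral_mono_of_nonneg (ae_of_all _ fun _ => by positivity)
          ((integrable_homothety_prod volume hU_bdd hh 2).integral_prod_left.const_mul _)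
          ((ae_restrict_iff' hU_open.measurableSet).2 (ae_of_all _ hpointwise))
    _ ≤ Metric.diam U ^ 2 * ∫ y in U, h y := by
        rw [integral_const_mul]
        refine mul_le_mul_of_nonneg_left ?_ (by positivity)
        simpa only [hrank] using setIntegral_setIntegral_homothety_le volume hU_open.measurableSet
          hU_bdd hU_conv hx₀ hh fun y => sq_nonneg (B y - c)

/-- Remark 3.2: with `A_new, A_av, B_av` as in the averaging theorem,
`∫_U |A_new(x) − A_av(x)|² dx ≤ δ² ∫_U |B(y) − B_av|² dy`. -/
theorem stmt_6 (U : Set (EuclideanSpace ℝ (Fin 2)))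
    (hU_open : IsOpen U) (hU_bdd : Bornology.IsBounded U) (hU_conv : Convex ℝ U)
    (x₀ : EuclideanSpace ℝ (Fin 2)) (hx₀ : x₀ ∈ U)
    (B : EuclideanSpace ℝ (Fin 2) → ℝ)
    (hB_diff : Differentiable ℝ B)
    (hB_L2 : MemLp B 2 (volume : Measure (EuclideanSpace ℝ (Fin 2))))
    (hB_grad_L2 : MemLp (fun x => fderiv ℝ B x) 2
      (volume : Measure (EuclideanSpace ℝ (Fin 2)))) :
    ∫ x in U,
        ‖((2:ℝ) • ∫ s in (0:ℝ)..1, B (s • (x - x₀) + x₀) • A0 (s • (x - x₀)))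
          - ((volume U).toReal⁻¹ * ∫ y in U, B y) • A0 (x - x₀)‖ ^ 2
      ≤ Metric.diam U ^ 2 *
          ∫ y in U, (B y - (volume U).toReal⁻¹ * ∫ z in U, B z) ^ 2 :=
  stmt_6_general U hU_open hU_bdd hU_conv x₀ hx₀ B hB_diff

end
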